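/- arXiv:math/0504359 — 3 statements merged into one kernel-verified Lean document; each statement's English description precedes it below -/
import Mathlib

section
/- Let F be a field, α ∈ F nonzero, and n a positive integer. If α is not a q-th power in F for every prime divisor q of n, then either the polynomial X^n − α is irreducible over F, or 4 divides n and α ∈ −4F^4 (i.e., α = −4β^4 for some β ∈ F). -/
/-!
Induct on the number of prime factors of `n = p * m`. By `X_pow_mul_sub_C_irreducible` it
suffices that `X ^ p - a` is irreducible and that `X ^ m - x` is irreducible over `K(x)` for a
root `x` of `X ^ p - a`. The hypotheses on `a` pass to `x` by taking norms, since
`N(x) = ± a` and `(-4) ^ p` is `-4` times a fourth power for odd `p`. Norms fail only for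
`p = 2`; then `K(x) = K(√a)`, and `(c + d √a) ^ 2 = ± √a` forces `a = -4 c ^ 4`.
-/

open Polynomial IntermediateField

lemma exists_neg_four_pow_mul_pow_four_eq {R : Type*} [CommRing R] {p : ℕ} (hp : Odd p)
    (b : R) : ∃ c : R, (-4) ^ p * b ^ 4 = -4 * c ^ 4 := by
  obtain ⟨k, rfl⟩ := hp
  exact ⟨2 ^ k * b, by
    rw [pow_succ, pow_mul, show (-4 : R) ^ 2 = 2 ^ 4 by norm_num, ← pow_mul, mul_comm 4 k, pow_mul]
    ring⟩

lemma PowerBasis.exists_eq_algebraMap_add_algebraMap_mul_gen {K L : Type*} [CommRing K] [Ring L]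
    [Nontrivial L] [Algebra K L] (pb : PowerBasis K L) (hdim : pb.dim = 2) (β : L) :
    ∃ c d : K, β = algebraMap K L c + algebraMap K L d * pb.gen := by
  obtain ⟨f, hf_deg, rfl⟩ := pb.exists_eq_aeval β
  refine ⟨f.coeff 0, f.coeff 1, ?_⟩
  conv_lhs => rw [eq_X_add_C_of_natDegree_le_one (by omega : f.natDegree ≤ 1)]
  simp only [map_add, map_mul, aeval_C, aeval_X]
  exact add_comm _ _

section Quadratic

variable {K L : Type*} [Field K] [CommRing L] [Nontrivial L] [Algebra K L] {a : K} {g : L}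

lemma eq_zero_of_algebraMap_add_algebraMap_mul_eq_zero (hg : g ^ 2 = algebraMap K L a)
    (ha : ∀ b : K, b ^ 2 ≠ a) {c d : K} (h : algebraMap K L c + algebraMap K L d * g = 0) :
    c = 0 ∧ d = 0 := by
  have hd : d = 0 := by
    by_contra hd
    apply ha (c / d)
    have : algebraMap K L (c ^ 2) = algebraMap K L (d ^ 2 * a) := by
      rw [map_mul, map_pow, map_pow, ← hg, ← mul_pow, eq_neg_of_add_eq_zero_left h, neg_sq]
    rw [div_pow, (algebraMap K L).injective this]
    field_simp
  subst hd
  simpa using h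

lemma PowerBasis.sq_ne_algebraMap_mul_gen (pb : PowerBasis K L) (hdim : pb.dim = 2)
    (hg : pb.gen ^ 2 = algebraMap K L a) (ha2 : ∀ b : K, b ^ 2 ≠ a)
    (ha4 : ∀ b : K, a ≠ -4 * b ^ 4) {e : K} (he : e ^ 2 = 1) (β : L) :
    β ^ 2 ≠ algebraMap K L e * pb.gen := by
  intro hβ
  obtain ⟨c, d, rfl⟩ := pb.exists_eq_algebraMap_add_algebraMap_mul_gen hdim β
  have hexp : algebraMap K L (c ^ 2 + d ^ 2 * a) + algebraMap K L (2 * c * d - e) * pb.gen = 0 := by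
    rw [← sub_eq_zero.mpr hβ]
    simp only [map_add, map_sub, map_mul, map_pow, map_ofNat, ← hg]
    ring
  obtain ⟨h0, h1⟩ := eq_zero_of_algebraMap_add_algebraMap_mul_eq_zero hg ha2 hexp
  exact ha4 c (by linear_combination (4 * c ^ 2) * h0 - (2 * c * d + e) * a * h1 - a * he)

end Quadratic

section Kummer

variable {K E : Type*} [Field K] [Field E] [Algebra K E] {p : ℕ} {a : K} {x : E}

lemma isIntegral_of_minpoly_eq_X_pow_sub_C (hp : p ≠ 0) (hx : minpoly K x = X ^ p - C a) :
    IsIntegral K x :=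
  minpoly.ne_zero_iff.mp (hx ▸ X_pow_sub_C_ne_zero (Nat.pos_of_ne_zero hp) a)

lemma adjoinSimple_gen_pow_of_minpoly_eq_X_pow_sub_C (hx : minpoly K x = X ^ p - C a) :
    AdjoinSimple.gen K x ^ p = algebraMap K K⟮x⟯ a := by
  simpa [minpoly_gen, hx, sub_eq_zero] using minpoly.aeval K (AdjoinSimple.gen K x)

lemma finrank_adjoin_simple_of_minpoly_eq_X_pow_sub_C (hp : p ≠ 0)
    (hx : minpoly K x = X ^ p - C a) : Module.finrank K K⟮x⟯ = p := by
  rw [adjoin.finrank (isIntegral_of_minpoly_eq_X_pow_sub_C hp hx), hx, natDegree_X_pow_sub_C]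

lemma norm_adjoinSimple_gen_of_minpoly_eq_X_pow_sub_C (hp : p ≠ 0)
    (hx : minpoly K x = X ^ p - C a) :
    Algebra.norm K (AdjoinSimple.gen K x) = -(-1) ^ p * a := by
  rw [← adjoin.powerBasis_gen (isIntegral_of_minpoly_eq_X_pow_sub_C hp hx),
    Algebra.PowerBasis.norm_gen_eq_coeff_zero_minpoly, adjoin.powerBasis_gen, minpoly_gen]
  simp [adjoin.powerBasis, hx, coeff_X_pow, hp.symm]

lemma sq_ne_algebraMap_mul_adjoinSimple_gen (hx : minpoly K x = X ^ 2 - C a)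
    (ha2 : ∀ b : K, b ^ 2 ≠ a) (ha4 : ∀ b : K, a ≠ -4 * b ^ 4) {e : K} (he : e ^ 2 = 1)
    (β : K⟮x⟯) : β ^ 2 ≠ algebraMap K K⟮x⟯ e * AdjoinSimple.gen K x := by
  have hint := isIntegral_of_minpoly_eq_X_pow_sub_C two_ne_zero hx
  rw [← adjoin.powerBasis_gen hint]
  refine PowerBasis.sq_ne_algebraMap_mul_gen _ ?_ ?_ ha2 ha4 he β
  · simp [adjoin.powerBasis, hx]
  · rw [adjoin.powerBasis_gen]
    exact adjoinSimple_gen_pow_of_minpoly_eq_X_pow_sub_C hx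

lemma pow_ne_adjoinSimple_gen_of_minpoly_eq_X_pow_sub_C (hp : p.Prime)
    (hx : minpoly K x = X ^ p - C a) {q : ℕ} (hq : q.Prime) (ha : ∀ b : K, b ^ q ≠ a)
    (ha4 : p = 2 → q = 2 → ∀ b : K, a ≠ -4 * b ^ 4) (β : K⟮x⟯) :
    β ^ q ≠ AdjoinSimple.gen K x := by
  intro hβ
  by_cases hpq : p = 2 ∧ q = 2
  · obtain ⟨rfl, rfl⟩ := hpq
    exact sq_ne_algebraMap_mul_adjoinSimple_gen hx ha (ha4 rfl rfl) (one_pow 2) β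
      (by rw [hβ, map_one, one_mul])
  have hN : Algebra.norm K β ^ q = -(-1) ^ p * a := by
    rw [← map_pow, hβ, norm_adjoinSimple_gen_of_minpoly_eq_X_pow_sub_C hp.ne_zero hx]
  rcases hp.eq_two_or_odd' with rfl | hp_odd
  · have hq_odd : Odd q := hq.odd_of_ne_two fun h ↦ hpq ⟨rfl, h⟩
    exact ha (-Algebra.norm K β) (by rw [hq_odd.neg_pow, hN]; ring)
  · exact ha (Algebra.norm K β) (by rw [hN, hp_odd.neg_one_pow]; ring)

lemma adjoinSimple_gen_ne_neg_four_mul_pow_four_of_minpoly_eq_X_pow_sub_C (hp : p.Prime)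
    (hx : minpoly K x = X ^ p - C a) (ha2 : p = 2 → ∀ b : K, b ^ 2 ≠ a)
    (ha4 : ∀ b : K, a ≠ -4 * b ^ 4) (β : K⟮x⟯) :
    AdjoinSimple.gen K x ≠ -4 * β ^ 4 := by
  intro hβ
  rcases hp.eq_two_or_odd' with rfl | hp_odd
  · exact sq_ne_algebraMap_mul_adjoinSimple_gen hx (ha2 rfl) ha4 (e := -1) (by norm_num)
      (2 * β ^ 2) (by rw [map_neg, map_one, neg_one_mul, hβ]; ring)
  · have hN := congr_arg (Algebra.norm K) hβ
    rw [norm_adjoinSimple_gen_of_minpoly_eq_X_pow_sub_C hp.ne_zero hx, hp_odd.neg_one_pow,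
      ← map_ofNat (algebraMap K K⟮x⟯) 4, ← map_neg, map_mul, map_pow,
      Algebra.norm_algebraMap, finrank_adjoin_simple_of_minpoly_eq_X_pow_sub_C hp.ne_zero hx]
      at hN
    obtain ⟨c, hc⟩ := exists_neg_four_pow_mul_pow_four_eq hp_odd (Algebra.norm K β)
    exact ha4 c (by rw [← hc, ← hN]; ring)

end Kummer

theorem X_pow_sub_C_irreducible_of_forall_prime {K : Type*} [Field K] {n : ℕ} (hn : n ≠ 0)
    {a : K} (ha : ∀ p : ℕ, p.Prime → p ∣ n → ∀ b : K, b ^ p ≠ a)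
    (ha4 : 4 ∣ n → ∀ b : K, a ≠ -4 * b ^ 4) :
    Irreducible (X ^ n - C a) := by
  induction n using induction_on_primes generalizing K a with
  | zero => exact absurd rfl hn
  | one => simpa using irreducible_X_sub_C a
  | prime_mul p m hp IH =>
    rw [mul_comm]
    refine X_pow_mul_sub_C_irreducible
      (X_pow_sub_C_irreducible_of_prime hp (ha p hp (dvd_mul_right p m))) fun E _ _ x hx ↦ ?_
    refine IH (right_ne_zero_of_mul hn) (fun q hq hqm ↦ ?_) fun h4m ↦ ?_
    · exact pow_ne_adjoinSimple_gen_of_minpoly_eq_X_pow_sub_C hp hx hq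
        (ha q hq (hqm.mul_left p)) fun hp2 hq2 ↦ ha4 (by subst hp2 hq2; omega)
    · exact adjoinSimple_gen_ne_neg_four_mul_pow_four_of_minpoly_eq_X_pow_sub_C hp hx
        (fun hp2 ↦ ha 2 Nat.prime_two (hp2 ▸ dvd_mul_right p m)) (ha4 (h4m.mul_left p))

theorem stmt_0_general {F : Type*} [Field F] (α : F) (n : ℕ) (hn : 1 ≤ n)
    (h : ∀ q : ℕ, q.Prime → q ∣ n → ¬∃ β : F, β ^ q = α) :
    Irreducible ((X : F[X]) ^ n - C α) ∨ (4 ∣ n ∧ ∃ β : F, α = -4 * β ^ 4) := by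
  by_cases hc : 4 ∣ n ∧ ∃ β : F, α = -4 * β ^ 4
  · exact Or.inr hc
  · exact Or.inl <| X_pow_sub_C_irreducible_of_forall_prime (by omega)
      (fun q hq hqn b hb ↦ h q hq hqn ⟨b, hb⟩) fun h4 b hb ↦ hc ⟨h4, b, hb⟩

theorem stmt_0 {F : Type*} [Field F] (α : F) (hα : α ≠ 0) (n : ℕ) (hn : 1 ≤ n)
    (h : ∀ q : ℕ, q.Prime → q ∣ n → ¬∃ β : F, β ^ q = α) :
    Irreducible ((X : F[X]) ^ n - C α) ∨ (4 ∣ n ∧ ∃ β : F, α = -4 * β ^ 4) :=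
  stmt_0_general α n hn h
end

section
/- Let L be a quadratic field with L ⊆ ℚ(ζ_d). Then the d-th cyclotomic polynomial Φ_d factors over L into a product of two monic irreducible polynomials, each of degree φ(d)/2. -/
/-!
Every primitive `d`-th root of unity `η` generates the same field `ℚ(ζ)`, of degree `φ(d)`, which
contains `L`; hence `L(η) = ℚ(η)` and the tower law gives `[L(η) : L] = φ(d)/2`. So the minimal
polynomial `f` of `ζ` over `L` has degree `φ(d)/2`, and so has the cofactor `g = Φ_d / f`. Any
root of `g` is a primitive `d`-th root of unity whose minimal polynomial over `L` divides `g` and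
has the same degree, so `g` is that minimal polynomial and is irreducible.
-/

open IntermediateField Polynomial

theorem IsPrimitiveRoot.adjoin_simple_le {F E : Type*} [Field F] [Field E] [Algebra F E]
    {ζ η : E} {d : ℕ} [NeZero d] (hζ : IsPrimitiveRoot ζ d) (hη : η ^ d = 1) :
    F⟮η⟯ ≤ F⟮ζ⟯ := by
  obtain ⟨i, -, rfl⟩ := hζ.eq_pow_of_pow_eq_one hη
  exact adjoin_simple_le_iff.mpr (pow_mem (mem_adjoin_simple_self F ζ) i)

theorem IntermediateField.finrank_mul_natDegree_minpoly_of_le_adjoin {K E : Type*} [Field K]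
    [Field E] [Algebra K E] {L : IntermediateField K E} {x : E} (hx : IsIntegral K x)
    (hL : L ≤ K⟮x⟯) :
    Module.finrank K L * (minpoly L x).natDegree = (minpoly K x).natDegree := by
  have hrestrict : (L⟮x⟯).restrictScalars K = K⟮x⟯ := by
    rw [restrictScalars_adjoin_eq_sup, sup_eq_right.mpr hL]
  rw [← adjoin.finrank hx, ← adjoin.finrank hx.tower_top, ← hrestrict]
  exact Module.finrank_mul_finrank K L L⟮x⟯

theorem IsPrimitiveRoot.natDegree_minpoly_rat {K : Type*} [Field K] [CharZero K] {ζ : K} {d : ℕ}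
    (hζ : IsPrimitiveRoot ζ d) (hd : 0 < d) : (minpoly ℚ ζ).natDegree = d.totient := by
  rw [← cyclotomic_eq_minpoly_rat hζ hd, natDegree_cyclotomic]

theorem Polynomial.aeval_cyclotomic_eq_zero_iff {F K : Type*} [CommRing F] [CommRing K]
    [IsDomain K] [Algebra F K] {d : ℕ} [NeZero (d : K)] {μ : K} :
    aeval μ (cyclotomic d F) = 0 ↔ IsPrimitiveRoot μ d := by
  rw [aeval_def, eval₂_eq_eval_map, map_cyclotomic, ← IsRoot.def, isRoot_cyclotomic_iff]

theorem IsPrimitiveRoot.finrank_mul_natDegree_minpoly {K : Type*} [Field K] [CharZero K]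
    {L : IntermediateField ℚ K} {ζ η : K} {d : ℕ} (hd : 0 < d) (hζ : IsPrimitiveRoot ζ d)
    (hη : IsPrimitiveRoot η d) (hL : L ≤ ℚ⟮ζ⟯) :
    Module.finrank ℚ L * (minpoly L η).natDegree = d.totient := by
  have : NeZero d := ⟨hd.ne'⟩
  have hηℚ : IsIntegral ℚ η := (hη.isIntegral hd).tower_top
  rw [finrank_mul_natDegree_minpoly_of_le_adjoin hηℚ
    (hL.trans (hη.adjoin_simple_le hζ.pow_eq_one)), hη.natDegree_minpoly_rat hd]

/-- If `L` is a quadratic field contained in the `d`-th cyclotomic field, then the `d`-th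
cyclotomic polynomial splits over `L` as a product of two monic irreducible polynomials,
each of degree `φ(d)/2`. -/
theorem stmt_9 (d : ℕ) (hd : 0 < d) (ζ : ℂ) (hζ : IsPrimitiveRoot ζ d)
    (L : IntermediateField ℚ ℂ) (hL : Module.finrank ℚ L = 2)
    (hsub : L ≤ IntermediateField.adjoin ℚ {ζ}) :
    ∃ f g : Polynomial L, f.Monic ∧ g.Monic ∧ Irreducible f ∧ Irreducible g ∧
      cyclotomic d L = f * g ∧
      f.natDegree = Nat.totient d / 2 ∧ g.natDegree = Nat.totient d / 2 := by
  have : NeZero d := ⟨hd.ne'⟩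
  have hdeg (η : ℂ) (hη : IsPrimitiveRoot η d) : 2 * (minpoly L η).natDegree = d.totient :=
    hL ▸ hζ.finrank_mul_natDegree_minpoly hd hη hsub
  have hζL : IsIntegral L ζ := (hζ.isIntegral hd).tower_top
  obtain ⟨g, hfg⟩ : minpoly L ζ ∣ cyclotomic d L :=
    minpoly.dvd L ζ (aeval_cyclotomic_eq_zero_iff.mpr hζ)
  have hf : (minpoly L ζ).Monic := minpoly.monic hζL
  have hg : g.Monic := hf.of_mul_monic_left (hfg ▸ cyclotomic.monic d L)
  have hfg_deg : (minpoly L ζ).natDegree + g.natDegree = d.totient := by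
    rw [← hf.natDegree_mul hg, ← hfg, natDegree_cyclotomic]
  have hf_deg := hdeg ζ hζ
  have hg_pos : 0 < g.natDegree := by have := minpoly.natDegree_pos hζL; omega
  obtain ⟨η, hgη⟩ :=
    IsAlgClosed.exists_aeval_eq_zero ℂ g (natDegree_pos_iff_degree_pos.mp hg_pos).ne'
  have hη : IsPrimitiveRoot η d :=
    aeval_cyclotomic_eq_zero_iff.mp (by rw [hfg, map_mul, hgη, mul_zero])
  have hg_eq : g = minpoly L η :=
    eq_of_monic_of_dvd_of_natDegree_le (minpoly.monic (hη.isIntegral hd).tower_top) hg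
      (minpoly.dvd L η hgη) (by have := hdeg η hη; omega)
  exact ⟨minpoly L ζ, g, hf, hg, minpoly.irreducible hζL,
    hg_eq ▸ minpoly.irreducible (hη.isIntegral hd).tower_top, hfg, by omega, by omega⟩
end

section
/- Let G be a finite group, Λ a semisimple ring in which |G| is invertible, and t : G → Aut(Λ) a group homomorphism. Then the skew group ring Λ^t[G] is semisimple. -/
/-!
Maschke's averaging argument. Since `Λ` is semisimple, every `S`-submodule `N` of an `S`-module
`M` has a `Λ`-linear projection `π` onto it. Averaging its conjugates,
`m ↦ |G|⁻¹ • ∑ σ, j σ • π (j σ⁻¹ • m)`, gives a map that commutes with every `j τ` (reindex the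
sum) and still with `Λ` (the relation `j σ * ι a = ι (t σ a) * j σ` moves `Λ` past the `j σ`),
hence with all of `S = ∑ σ, j σ * ι Λ`; it is an `S`-linear projection onto `N`.
-/

/-- `S` is a skew group ring of the finite group `G` over the ring `Λ` with respect to the
action `t : G →* RingAut Λ`. -/
structure IsSkewGroupRing (G : Type*) [Group G] [Fintype G]
    (Λ : Type*) [Ring Λ] (S : Type*) [Ring S]
    (t : G →* RingAut Λ) (ι : Λ →+* S) (j : G →* Sˣ) : Prop where
  comm : ∀ (τ : G) (a : Λ), (j τ : S) * ι a = ι (t τ a) * (j τ : S)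
  free : ∀ x : S, ∃! c : G → Λ, x = ∑ σ : G, (j σ : S) * ι (c σ)

namespace IsSkewGroupRing

variable {G Λ S M : Type*} [Group G] [Fintype G] [Ring Λ] [Ring S] [AddCommGroup M] [Module S M]
  {t : G →* RingAut Λ} {ι : Λ →+* S} {j : G →* Sˣ}

def average (j : G →* Sˣ) (f : M →+ M) : M →+ M where
  toFun m := ∑ σ : G, (j σ : S) • f ((j σ⁻¹ : S) • m)
  map_zero' := by simp
  map_add' m m' := by simp [Finset.sum_add_distrib]

theorem average_apply (f : M →+ M) (m : M) :
    average j f m = ∑ σ : G, (j σ : S) • f ((j σ⁻¹ : S) • m) := rfl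

theorem average_units_smul (f : M →+ M) (τ : G) (m : M) :
    average j f ((j τ : S) • m) = (j τ : S) • average j f m := by
  simp only [average_apply, Finset.smul_sum, smul_smul]
  refine (Fintype.sum_equiv (Equiv.mulLeft τ) _ _ fun σ => ?_).symm
  simp [← Units.val_mul, ← map_mul]

theorem average_apply_of_mem {N : Submodule S M} {f : M →+ M} (hf : ∀ m ∈ N, f m = m)
    {m : M} (hm : m ∈ N) : average j f m = Fintype.card G • m := by
  simp [average_apply, hf _ (N.smul_mem _ hm), smul_smul, ← Units.val_mul]

theorem average_mem {N : Submodule S M} {f : M →+ M} (hf : ∀ m, f m ∈ N) (m : M) :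
    average j f m ∈ N :=
  N.sum_mem fun _ _ => N.smul_mem _ (hf _)

theorem average_ringHom_smul (hS : IsSkewGroupRing G Λ S t ι j) {f : M →+ M}
    (hf : ∀ (a : Λ) (m : M), f (ι a • m) = ι a • f m) (a : Λ) (m : M) :
    average j f (ι a • m) = ι a • average j f m := by
  simp only [average_apply, Finset.smul_sum]
  refine Finset.sum_congr rfl fun σ _ => ?_
  have hσ : (j σ : S) * ι (t σ⁻¹ a) = ι a * j σ := by
    rw [hS.comm, ← RingAut.mul_apply, ← map_mul, mul_inv_cancel, map_one, RingAut.one_apply]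
  rw [← mul_smul, hS.comm, mul_smul, hf, smul_smul, hσ, mul_smul]

theorem average_smul (hS : IsSkewGroupRing G Λ S t ι j) {f : M →+ M}
    (hf : ∀ (a : Λ) (m : M), f (ι a • m) = ι a • f m) (s : S) (m : M) :
    average j f (s • m) = s • average j f m := by
  obtain ⟨c, rfl, -⟩ := hS.free s
  simp only [Finset.sum_smul, map_sum, mul_smul, average_units_smul,
    hS.average_ringHom_smul hf]

theorem exists_addMonoidHom_proj [IsSemisimpleRing Λ] (ι : Λ →+* S) (N : Submodule S M) :
    ∃ π : M →+ M, (∀ (a : Λ) (m : M), π (ι a • m) = ι a • π m) ∧ (∀ m, π m ∈ N) ∧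
      ∀ m ∈ N, π m = m := by
  let _ : Module Λ M := Module.compHom M ι
  let NΛ : Submodule Λ M :=
    { N.toAddSubmonoid with smul_mem' := fun a _ hm => N.smul_mem (ι a) hm }
  obtain ⟨N', hN'⟩ := ComplementedLattice.exists_isCompl NΛ
  let π := NΛ.projection N' hN'
  exact ⟨π.toAddMonoidHom, π.map_smul, Submodule.projection_apply_mem hN',
    fun m hm => Submodule.projection_apply_left hN' ⟨m, hm⟩⟩

theorem exists_isCompl [IsSemisimpleRing Λ] (hS : IsSkewGroupRing G Λ S t ι j)
    (hcard : IsUnit (Fintype.card G : Λ)) (N : Submodule S M) :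
    ∃ N' : Submodule S M, IsCompl N N' := by
  obtain ⟨π, hπΛ, hπN, hπ⟩ := exists_addMonoidHom_proj ι N
  obtain ⟨u, hu⟩ : IsUnit (Fintype.card G : S) := by simpa using hcard.map ι
  have hu_comm (s : S) : (↑u⁻¹ : S) * s = s * u⁻¹ :=
    (hu ▸ Nat.cast_commute (Fintype.card G) s).units_inv_left.eq
  let p : M →ₗ[S] N :=
    { toFun m := ⟨(↑u⁻¹ : S) • average j π m, N.smul_mem _ (average_mem hπN m)⟩
      map_add' m m' := by simp
      map_smul' s m := by
        simp [hS.average_smul hπΛ, smul_smul, hu_comm] }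
  refine ⟨LinearMap.ker p, LinearMap.isCompl_of_proj fun m => Subtype.ext ?_⟩
  simp [p, average_apply_of_mem hπ m.2, ← Nat.cast_smul_eq_nsmul S, ← hu, smul_smul]

theorem isSemisimpleModule [IsSemisimpleRing Λ] (hS : IsSkewGroupRing G Λ S t ι j)
    (hcard : IsUnit (Fintype.card G : Λ)) : IsSemisimpleModule S M where
  exists_isCompl := hS.exists_isCompl hcard

end IsSkewGroupRing

/-- Maschke-type theorem: if `Λ` is semisimple and the order of the finite group `G` is
invertible in `Λ`, then the skew group ring `Λ^t[G]` is semisimple. -/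
theorem stmt_18 {G Λ S : Type*} [Group G] [Fintype G] [Ring Λ] [Ring S]
    [IsSemisimpleRing Λ]
    (t : G →* RingAut Λ) (ι : Λ →+* S) (j : G →* Sˣ)
    (hS : IsSkewGroupRing G Λ S t ι j)
    (hcard : IsUnit ((Fintype.card G : Λ))) :
    IsSemisimpleRing S :=
  hS.isSemisimpleModule hcard
end
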